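/- arXiv:1705.06408 — 2 statements merged into one kernel-verified Lean document; each statement's English description precedes it below -/
import Mathlib

section
/- Let X ∈ {0,1}^d with exactly s nonzeros where s < d/4, and H the Householder reflection with normal v = (1/√d,…,1/√d). Then the regularity constant of HX equals c' = d/s - 4 + 4s/d, which is strictly less than d/s. -/
/-- Regularity constant `c(Y) = d‖Y²‖_∞ / ‖Y‖₂²` of a vector `Y ∈ ℝ^d`. -/
noncomputable def regConst (d : ℕ) (Y : Fin d → ℝ) : ℝ :=
  (d : ℝ) * (⨆ i, (Y i) ^ 2) / ∑ i, (Y i) ^ 2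

/-!
For `X ∈ {0,1}^d` with `s` ones, `v = 𝟙/√d` gives `HX = X - (2s/d)𝟙`. As for any reflection,
`‖HX‖₂² = ‖X‖₂² = s`, while the largest squared entry is `(1 - 2s/d)²`, attained at a one of `X`:
since `s < d/4` the shift `2s/d` is below `1/2`, so the entries `-2s/d` at the zeros of `X` are
smaller in absolute value. Hence `c(HX) = d(1 - 2s/d)²/s = d/s - 4 + 4s/d`.
-/

open Matrix Finset

theorem one_sub_two_smul_vecMulVec_mulVec {n R : Type*} [Fintype n] [DecidableEq n] [CommRing R]
    (v x : n → R) : (1 - (2 : R) • vecMulVec v v) *ᵥ x = x - (2 * (v ⬝ᵥ x)) • v := by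
  rw [sub_mulVec, one_mulVec, smul_mulVec, vecMulVec_mulVec, op_smul_eq_smul, smul_smul]

theorem one_sub_two_smul_vecMulVec_const_mulVec {n : Type*} [Fintype n] [DecidableEq n]
    (x : n → ℝ) (i : n) :
    ((1 - (2 : ℝ) • vecMulVec (fun _ => 1 / √(Fintype.card n)) (fun _ => 1 / √(Fintype.card n)))
      *ᵥ x) i = x i - 2 * (∑ j, x j) / Fintype.card n := by
  rw [one_sub_two_smul_vecMulVec_mulVec]
  simp only [Pi.sub_apply, Pi.smul_apply, smul_eq_mul, dotProduct, ← Finset.mul_sum]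
  field_simp
  rw [Real.sq_sqrt (Nat.cast_nonneg _)]

section ZeroOne

variable {ι : Type*} [Fintype ι] {X : ι → ℝ}

theorem sum_eq_card_filter_eq_one_of_zero_one (hX : ∀ i, X i = 0 ∨ X i = 1) :
    ∑ i, X i = #{i | X i = 1} := by
  rw [← sum_boole]
  refine sum_congr rfl fun i _ => ?_
  rcases hX i with h | h <;> simp [h]

theorem sum_sq_sub_const_of_zero_one (hX : ∀ i, X i = 0 ∨ X i = 1) (c : ℝ) :
    ∑ i, (X i - c) ^ 2 = (1 - 2 * c) * ∑ i, X i + Fintype.card ι * c ^ 2 := by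
  have hsq : ∀ i, (X i - c) ^ 2 = (1 - 2 * c) * X i + c ^ 2 := by
    intro i; rcases hX i with h | h <;> rw [h] <;> ring
  simp only [hsq, sum_add_distrib, ← mul_sum, sum_const, card_univ, nsmul_eq_mul]

theorem iSup_sq_sub_const_of_zero_one (hX : ∀ i, X i = 0 ∨ X i = 1) {i₀ : ι} (hi₀ : X i₀ = 1)
    {c : ℝ} (hc : c ≤ 1 / 2) : ⨆ i, (X i - c) ^ 2 = (1 - c) ^ 2 := by
  have hle : ∀ i, (X i - c) ^ 2 ≤ (1 - c) ^ 2 := by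
    intro i
    rcases hX i with h | h
    · rw [h]; nlinarith
    · rw [h]
  have : Nonempty ι := ⟨i₀⟩
  refine le_antisymm (ciSup_le hle) ?_
  simpa [hi₀] using le_ciSup (Finite.bddAbove_range fun i => (X i - c) ^ 2) i₀

end ZeroOne

theorem householder_regConst_very_sparse_general (d s : ℕ) (hs1 : 1 ≤ s)
    (hsmall : (s : ℝ) < (d : ℝ) / 4)
    (X : Fin d → ℝ) (hX : ∀ i, X i = 0 ∨ X i = 1)
    (hs : (Finset.univ.filter fun i => X i = 1).card = s) :
    let v : Fin d → ℝ := fun _ => 1 / Real.sqrt d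
    let H : Matrix (Fin d) (Fin d) ℝ := 1 - (2 : ℝ) • Matrix.vecMulVec v v
    regConst d (H.mulVec X) = (d : ℝ) / s - 4 + 4 * s / d ∧
    (d : ℝ) / s - 4 + 4 * s / d < (d : ℝ) / s := by
  intro v H
  have hs₀ : (0 : ℝ) < s := by exact_mod_cast hs1
  have hd₀ : (0 : ℝ) < d := by linarith
  have hsum : ∑ i, X i = s := by rw [sum_eq_card_filter_eq_one_of_zero_one hX, hs]
  have hHX : H *ᵥ X = fun i => X i - 2 * s / d := by
    ext i
    simpa only [Fintype.card_fin, hsum] using one_sub_two_smul_vecMulVec_const_mulVec X i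
  obtain ⟨i₀, hi₀⟩ := card_pos.mp (by omega : 0 < #{i | X i = 1})
  have hshift : 2 * (s : ℝ) / d ≤ 1 / 2 := by rw [div_le_iff₀ hd₀]; linarith
  have hsd : 4 * (s : ℝ) / d < 4 := by rw [div_lt_iff₀ hd₀]; linarith
  refine ⟨?_, by linarith⟩
  rw [regConst, hHX, iSup_sq_sub_const_of_zero_one hX (mem_filter.mp hi₀).2 hshift,
    sum_sq_sub_const_of_zero_one hX, hsum, Fintype.card_fin]
  field_simp [hd₀.ne']
  ring

/-- If `X ∈ {0,1}^d` has exactly `s` nonzeros with `s < d/4`, then the regularity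
constant of the Householder-transformed vector is `d/s - 4 + 4s/d < d/s`. -/
theorem householder_regConst_very_sparse (d s : ℕ) (hd : 0 < d) (hs1 : 1 ≤ s)
    (hsmall : (s : ℝ) < (d : ℝ) / 4)
    (X : Fin d → ℝ) (hX : ∀ i, X i = 0 ∨ X i = 1)
    (hs : (Finset.univ.filter fun i => X i = 1).card = s) :
    let v : Fin d → ℝ := fun _ => 1 / Real.sqrt d
    let H : Matrix (Fin d) (Fin d) ℝ := 1 - (2 : ℝ) • Matrix.vecMulVec v v
    regConst d (H.mulVec X) = (d : ℝ) / s - 4 + 4 * s / d ∧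
    (d : ℝ) / s - 4 + 4 * s / d < (d : ℝ) / s :=
  householder_regConst_very_sparse_general d s hs1 hsmall X hX hs
end

section
/- (Basic Bound, single-vector version) Let X ∈ ℝ^d with ‖X‖₂ = 1 and ‖X²‖_∞ ≤ c/d for some c ∈ [1,d]. Let P be a uniformly random coordinate projection retaining k of d coordinates. Then for any ε > 0, Pr{ |(d/k)‖PX‖₂² − 1| ≥ ε } ≤ 2·exp(−2kε²/c²). -/
/-!
Hoeffding's bound for sampling without replacement, applied to the population `X i ^ 2 ∈ [0, c/d]`,
whose mean is `1/d`. With `y i = exp (t * a i)`, the sum of `exp (t * ∑ i ∈ S, a i)` over the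
`k`-subsets `S` is the elementary symmetric function `e_k(y)`, and the weak Maclaurin inequality
`e_k(y) ≤ C(d, k) (mean y) ^ k` reduces it to the `k`-th power of the moment generating function of
a single uniform draw, which Hoeffding's lemma bounds by `exp (t μ + w² t² / 8)` for a population
of width `w`. Chernoff's bound then gives `exp (-2 s² / (k w²))` for each tail of the deviation
`s = kε/d` of the sample sum, and `w = c/d` turns this into `exp (-2kε²/c²)`.
-/

open Finset Real ProbabilityTheory MeasureTheory

theorem pow_succ_add_mul_pow_mul_sub_le {x a : ℝ} (hx : 0 ≤ x) (ha : 0 ≤ a) (k : ℕ) :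
    a ^ (k + 1) + (k + 1) * a ^ k * (x - a) ≤ x ^ (k + 1) := by
  rcases ha.eq_or_lt with rfl | ha
  · rcases k with _ | k
    · simp
    · simpa using pow_nonneg hx _
  have bernoulli := one_add_mul_le_pow (a := (x - a) / a) (by
    rw [le_div_iff₀ ha]; linarith) (k + 1)
  calc a ^ (k + 1) + (k + 1) * a ^ k * (x - a)
      = a ^ (k + 1) * (1 + ((k + 1 : ℕ) : ℝ) * ((x - a) / a)) := by
        push_cast; field_simp; ring
    _ ≤ a ^ (k + 1) * (1 + (x - a) / a) ^ (k + 1) := by gcongr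
    _ = x ^ (k + 1) := by rw [← mul_pow]; congr 1; field_simp; ring

theorem Multiset.esymm_cons_succ {R : Type*} [CommSemiring R] (a : R) (m : Multiset R) (k : ℕ) :
    (a ::ₘ m).esymm (k + 1) = m.esymm (k + 1) + a * m.esymm k := by
  simp [Multiset.esymm, Multiset.powersetCard_cons, Multiset.sum_map_mul_left]

theorem Multiset.esymm_le_choose_mul_pow {m : Multiset ℝ} (hm : ∀ x ∈ m, 0 ≤ x) (k : ℕ) :
    m.esymm k ≤ (m.card.choose k) * (m.sum / m.card) ^ k := by
  induction m using Multiset.induction_on generalizing k with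
  | empty => cases k <;> simp [Multiset.esymm, Multiset.powersetCard_zero_right]
  | cons a m ih =>
    cases k with
    | zero => simp [Multiset.esymm]
    | succ k =>
    have ha : 0 ≤ a := hm a (Multiset.mem_cons_self a m)
    have hm' : ∀ x ∈ m, 0 ≤ x := fun x hx => hm x (Multiset.mem_cons_of_mem hx)
    have hsum : 0 ≤ m.sum := Multiset.sum_nonneg hm'
    set n := m.card
    set mean := m.sum / n
    set mean' := (a + m.sum) / (n + 1)
    have hmean : n * mean = m.sum := by
      rcases (Nat.zero_le n).eq_or_lt with h | h
      · simp [mean, ← h, Multiset.card_eq_zero.1 h.symm]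
      · exact mul_div_cancel₀ _ (by positivity)
    have hmean' : (n + 1) * (mean' - mean) = a - mean := by
      simp only [mean']; field_simp; linarith
    have hpascal : ((n + 1).choose (k + 1) : ℝ) = n.choose (k + 1) + n.choose k := by
      exact_mod_cast (Nat.choose_succ_succ' n k).trans (add_comm _ _)
    have habsorb : ((n + 1 : ℕ) : ℝ) * n.choose k = (n + 1).choose (k + 1) * (k + 1 : ℕ) := by
      exact_mod_cast Nat.add_one_mul_choose_eq n k
    push_cast at habsorb
    rw [Multiset.esymm_cons_succ, Multiset.card_cons, Multiset.sum_cons]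
    push_cast
    calc m.esymm (k + 1) + a * m.esymm k
        ≤ n.choose (k + 1) * mean ^ (k + 1) + a * (n.choose k * mean ^ k) :=
          add_le_add (ih hm' _) (mul_le_mul_of_nonneg_left (ih hm' _) ha)
      _ = (n + 1).choose (k + 1) * (mean ^ (k + 1) + (k + 1) * mean ^ k * (mean' - mean)) := by
          linear_combination (-(mean ^ k * mean)) * hpascal + (mean ^ k * (mean' - mean)) * habsorb
            + (-(n.choose k * mean ^ k)) * hmean'
      _ ≤ (n + 1).choose (k + 1) * mean' ^ (k + 1) := by
          gcongr
          exact pow_succ_add_mul_pow_mul_sub_le (by positivity) (by positivity) k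

theorem average_exp_mul_le_of_mem_Icc {ι : Type*} [Fintype ι] [Nonempty ι] {a : ι → ℝ}
    {lo hi : ℝ} (ha : ∀ i, a i ∈ Set.Icc lo hi) (t : ℝ) :
    (∑ i, exp (t * a i)) / Fintype.card ι
      ≤ exp (t * ((∑ i, a i) / Fintype.card ι) + (hi - lo) ^ 2 * t ^ 2 / 8) := by
  let _ : MeasurableSpace ι := ⊤
  set μ := (PMF.uniformOfFintype ι).toMeasure
  have hmean (f : ι → ℝ) : ∫ i, f i ∂μ = (∑ i, f i) / Fintype.card ι := by
    simp [μ, PMF.integral_eq_sum, div_eq_inv_mul, Finset.mul_sum]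
  have hoeffding := (hasSubgaussianMGF_of_mem_Icc (μ := μ) (Measurable.of_discrete).aemeasurable
    (ae_of_all _ ha)).mgf_le t
  simp only [mgf, hmean, mul_sub, exp_sub, ← Finset.sum_div, div_right_comm _ (exp _)] at hoeffding
  rw [exp_add, ← div_le_iff₀' (exp_pos _)]
  refine hoeffding.trans_eq (congrArg exp ?_)
  simp only [NNReal.coe_pow, NNReal.coe_div, NNReal.coe_ofNat, coe_nnnorm, norm_eq_abs, div_pow,
    sq_abs]
  ring

section SamplingWithoutReplacement

variable {ι : Type*} [Fintype ι] [Nonempty ι] {a : ι → ℝ} {lo hi : ℝ}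

theorem sum_powersetCard_exp_mul_sum_le (ha : ∀ i, a i ∈ Set.Icc lo hi) (k : ℕ) (t : ℝ) :
    ∑ S ∈ powersetCard k univ, exp (t * ∑ i ∈ S, a i)
      ≤ (Fintype.card ι).choose k
        * exp (k * (t * ((∑ i, a i) / Fintype.card ι) + (hi - lo) ^ 2 * t ^ 2 / 8)) := by
  set y : ι → ℝ := fun i => exp (t * a i)
  calc ∑ S ∈ powersetCard k univ, exp (t * ∑ i ∈ S, a i)
      = (univ.val.map y).esymm k := by
        simp only [esymm_map_val, y, mul_sum, exp_sum]
    _ ≤ (Fintype.card ι).choose k * ((∑ i, y i) / Fintype.card ι) ^ k := by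
        simpa using Multiset.esymm_le_choose_mul_pow (m := univ.val.map y)
          (by simp [y, (exp_pos _).le]) k
    _ ≤ _ := by
        rw [exp_nat_mul]
        gcongr
        exact average_exp_mul_le_of_mem_Icc ha t

theorem card_powersetCard_sum_ge_le (ha : ∀ i, a i ∈ Set.Icc lo hi) (k : ℕ) {s : ℝ}
    (hs : 0 ≤ s) :
    (#{S ∈ powersetCard k univ | k * ((∑ i, a i) / Fintype.card ι) + s ≤ ∑ i ∈ S, a i} : ℝ)
      ≤ (Fintype.card ι).choose k * exp (-(2 * s ^ 2 / (k * (hi - lo) ^ 2))) := by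
  set μ := (∑ i, a i) / Fintype.card ι with hμ
  set w := (k : ℝ) * (hi - lo) ^ 2
  rcases (show 0 ≤ w by positivity).eq_or_lt with hw | hw
  · -- `k = 0` or `lo = hi`: the exponent is `-(x / 0) = 0` and the bound is trivial
    rw [← hw, div_zero, neg_zero, exp_zero, mul_one]
    exact_mod_cast (card_filter_le _ _).trans (card_powersetCard k univ).le
  -- `t` minimises the exponent `w * t ^ 2 / 8 - t * s` below
  set t := 4 * s / w with ht_def
  have ht : 0 ≤ t := by positivity
  have markov : #{S ∈ powersetCard k univ | k * μ + s ≤ ∑ i ∈ S, a i} * exp (t * (k * μ + s))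
      ≤ ∑ S ∈ powersetCard k univ, exp (t * ∑ i ∈ S, a i) := by
    rw [← nsmul_eq_mul, ← sum_const]
    calc _ ≤ ∑ S ∈ powersetCard k univ with k * μ + s ≤ ∑ i ∈ S, a i,
          exp (t * ∑ i ∈ S, a i) :=
          sum_le_sum fun S hS => exp_le_exp.2 (mul_le_mul_of_nonneg_left (mem_filter.1 hS).2 ht)
      _ ≤ _ := sum_le_sum_of_subset_of_nonneg (filter_subset _ _) fun _ _ _ => (exp_pos _).le
  have := markov.trans (sum_powersetCard_exp_mul_sum_le ha k t)
  rw [← le_div_iff₀ (exp_pos _), mul_div_assoc, ← exp_sub, ← hμ] at this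
  refine this.trans_eq (congrArg _ (congrArg exp ?_))
  have hexponent :
      k * (t * μ + (hi - lo) ^ 2 * t ^ 2 / 8) - t * (k * μ + s) = w * t ^ 2 / 8 - t * s := by
    ring
  rw [hexponent, ht_def]
  field_simp
  ring

theorem card_powersetCard_abs_sum_sub_ge_le (ha : ∀ i, a i ∈ Set.Icc lo hi) (k : ℕ)
    {s : ℝ} (hs : 0 ≤ s) :
    (#{S ∈ powersetCard k univ | s ≤ |∑ i ∈ S, a i - k * ((∑ i, a i) / Fintype.card ι)|} : ℝ)
      ≤ 2 * (Fintype.card ι).choose k * exp (-(2 * s ^ 2 / (k * (hi - lo) ^ 2))) := by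
  classical
  have upper := card_powersetCard_sum_ge_le ha k hs
  have lower := card_powersetCard_sum_ge_le (a := fun i => -a i) (lo := -hi) (hi := -lo)
    (fun i => ⟨neg_le_neg (ha i).2, neg_le_neg (ha i).1⟩) k hs
  simp only [sum_neg_distrib, neg_div, mul_neg, neg_sub_neg] at lower
  calc _ ≤ ((#{S ∈ powersetCard k univ | k * ((∑ i, a i) / Fintype.card ι) + s ≤ ∑ i ∈ S, a i}
          + #{S ∈ powersetCard k univ | -(k * ((∑ i, a i) / Fintype.card ι)) + s ≤ -∑ i ∈ S, a i}
          : ℕ) : ℝ) := by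
        gcongr
        refine (card_le_card fun S hS => ?_).trans (card_union_le _ _)
        simp only [mem_union, mem_filter] at hS ⊢
        rcases le_abs'.1 hS.2 with h | h
        · exact .inr ⟨hS.1, by linarith⟩
        · exact .inl ⟨hS.1, by linarith⟩
    _ ≤ _ := by
        push_cast
        linarith

end SamplingWithoutReplacement

theorem randomSubspace_basic_bound_single_general (d k : ℕ) (c ε : ℝ)
    (hd : 0 < d) (hk0 : 0 < k)
    (X : Fin d → ℝ) (hXnorm : ∑ i, (X i) ^ 2 = 1)
    (hXreg : (⨆ i, (X i) ^ 2) ≤ c / d) (hε : 0 < ε) :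
    ((((Finset.powersetCard k (Finset.univ : Finset (Fin d))).filter
        (fun S => ε ≤ |((d : ℝ) / k) * ∑ i ∈ S, (X i) ^ 2 - 1|)).card : ℝ)
        / (d.choose k : ℝ))
      ≤ 2 * Real.exp (-(2 * k * ε ^ 2 / c ^ 2)) := by
  have : Nonempty (Fin d) := ⟨⟨0, hd⟩⟩
  have hX : ∀ i, X i ^ 2 ∈ Set.Icc 0 (c / d) := fun i =>
    ⟨sq_nonneg _, (le_ciSup (Set.finite_range _).bddAbove i).trans hXreg⟩
  have hevent (S : Finset (Fin d)) : ε ≤ |(d / k : ℝ) * ∑ i ∈ S, X i ^ 2 - 1|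
      ↔ k * ε / d ≤ |∑ i ∈ S, X i ^ 2 - k * ((∑ i, X i ^ 2) / d)| := by
    have hscale : (0 : ℝ) < k / d := by positivity
    have hrescale : |∑ i ∈ S, X i ^ 2 - k * ((∑ i, X i ^ 2) / d)|
        = k / d * |(d / k : ℝ) * ∑ i ∈ S, X i ^ 2 - 1| := by
      rw [hXnorm, ← abs_of_pos hscale, ← abs_mul]
      congr 1
      field_simp
    rw [hrescale, mul_div_right_comm, mul_le_mul_iff_right₀ hscale]
  have hbound := card_powersetCard_abs_sum_sub_ge_le hX k (s := k * ε / d) (by positivity)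
  rw [Fintype.card_fin, ← filter_congr fun S _ => hevent S] at hbound
  refine div_le_of_le_mul₀ (Nat.cast_nonneg _) (by positivity) (hbound.trans_eq ?_)
  rw [sub_zero]
  field_simp

/-- Basic bound, single-vector version: if `X` is a unit vector with
`‖X²‖_∞ ≤ c/d` and `P` is a uniformly random projection onto `k` of `d`
coordinates, then `Pr{|(d/k)‖PX‖₂² − 1| ≥ ε} ≤ 2exp(−2kε²/c²)`. -/
theorem randomSubspace_basic_bound_single (d k : ℕ) (c ε : ℝ)
    (hd : 0 < d) (hk0 : 0 < k) (hk : k ≤ d) (hc1 : 1 ≤ c) (hcd : c ≤ d)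
    (X : Fin d → ℝ) (hXnorm : ∑ i, (X i) ^ 2 = 1)
    (hXreg : (⨆ i, (X i) ^ 2) ≤ c / d) (hε : 0 < ε) :
    ((((Finset.powersetCard k (Finset.univ : Finset (Fin d))).filter
        (fun S => ε ≤ |((d : ℝ) / k) * ∑ i ∈ S, (X i) ^ 2 - 1|)).card : ℝ)
        / (d.choose k : ℝ))
      ≤ 2 * Real.exp (-(2 * k * ε ^ 2 / c ^ 2)) :=
  randomSubspace_basic_bound_single_general d k c ε hd hk0 X hXnorm hXreg hε
end
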